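/- Let S = k[x₁, x₂] be a polynomial ring over a field k and let D = S² be equipped with the S-linear endomorphism d given by the matrix with rows (x₁x₂, −x₂²) and (x₁², −x₁x₂). Then d² = 0 and the homology ker(d)/im(d) is isomorphic to k = S/(x₁, x₂) as an S-module. -/

import Mathlib

open MvPolynomial

/-- The 2×2 matrix with rows `(x₁x₂, −x₂²)`, `(x₁², −x₁x₂)` over `S = k[x₁, x₂]`. -/
noncomputable def rank2DM (k : Type) [Field k] :
    Matrix (Fin 2) (Fin 2) (MvPolynomial (Fin 2) k) :=
  !![X 0 * X 1, -(X 1 ^ 2);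
     X 0 ^ 2,   -(X 0 * X 1)]

/-!
The matrix factors as `d = φ ∘ ψ` through the Koszul complex `0 → S --φ--> S² --ψ--> S` of
`(x₁, x₂)`, with `φ h = (x₂ h, x₁ h)` and `ψ v = x₁ v₀ - x₂ v₁`. Since `ψ ∘ φ = 0`, `d² = 0`.
As `φ` is injective, `ker d = ker ψ`, which is `im φ` because `x₁, x₂` is a regular sequence;
and `im d = φ (im ψ) = φ (x₁, x₂)`. So `φ` induces `S ⧸ (x₁, x₂) ≃ ker d ⧸ im d`.
-/

open LinearMap

section Homology

variable {R M N : Type*} [Ring R] [AddCommGroup M] [Module R M] [AddCommGroup N] [Module R N]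

abbrev differentialHomology (d : N →ₗ[R] N) : Type _ :=
  ker d ⧸ (range d).comap (ker d).subtype

theorem comp_comp_self_eq_zero {φ : M →ₗ[R] N} {ψ : N →ₗ[R] M} (h : ψ ∘ₗ φ = 0) :
    (φ ∘ₗ ψ) ∘ₗ (φ ∘ₗ ψ) = 0 := by
  rw [comp_assoc, ← comp_assoc ψ φ ψ, h, zero_comp, comp_zero]

variable {φ : M →ₗ[R] N} {ψ : N →ₗ[R] M}

noncomputable def equivKerCompOfExact (hφ : Function.Injective φ)
    (hexact : Function.Exact φ ψ) : M ≃ₗ[R] ker (φ ∘ₗ ψ) :=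
  (LinearEquiv.ofInjective φ hφ).trans <| LinearEquiv.ofEq _ _ <| by
    rw [ker_comp_of_ker_eq_bot _ (ker_eq_bot.2 hφ), exact_iff.1 hexact]

theorem map_range_equivKerCompOfExact (hφ : Function.Injective φ)
    (hexact : Function.Exact φ ψ) :
    (range ψ).map (equivKerCompOfExact hφ hexact : M →ₗ[R] ker (φ ∘ₗ ψ)) =
      (range (φ ∘ₗ ψ)).comap (ker (φ ∘ₗ ψ)).subtype := by
  ext x
  simp only [Submodule.mem_map, Submodule.mem_comap, Submodule.coe_subtype, LinearEquiv.coe_coe,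
    mem_range, exists_exists_eq_and, comp_apply]
  constructor
  · rintro ⟨n, rfl⟩
    exact ⟨n, rfl⟩
  · rintro ⟨n, hn⟩
    exact ⟨n, Subtype.ext hn⟩

noncomputable def differentialHomologyEquivOfExact (hφ : Function.Injective φ)
    (hexact : Function.Exact φ ψ) :
    differentialHomology (φ ∘ₗ ψ) ≃ₗ[R] M ⧸ range ψ :=
  (Submodule.Quotient.equiv _ _ _ (map_range_equivKerCompOfExact hφ hexact)).symm

end Homology

section Koszul

variable {R : Type*} [CommRing R]

noncomputable def koszulIn (a b : R) : R →ₗ[R] (Fin 2 → R) :=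
  toSpanSingleton R _ ![b, a]

noncomputable def koszulOut (a b : R) : (Fin 2 → R) →ₗ[R] R :=
  a • proj 0 - b • proj 1

@[simp]
theorem koszulIn_apply (a b h : R) : koszulIn a b h = ![h * b, h * a] := by
  ext i
  fin_cases i <;> simp [koszulIn]

@[simp]
theorem koszulOut_apply (a b : R) (v : Fin 2 → R) : koszulOut a b v = a * v 0 - b * v 1 := rfl

theorem koszulIn_injective [NoZeroDivisors R] {a : R} (b : R) (ha : a ≠ 0) :
    Function.Injective (koszulIn a b) := by
  intro g h hgh
  have := congrFun hgh 1
  simp only [koszulIn_apply, Matrix.cons_val_one, Matrix.cons_val_zero] at this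
  exact mul_right_cancel₀ ha this

theorem range_koszulOut (a b : R) : range (koszulOut a b) = Ideal.span {a, b} := by
  ext x
  rw [mem_range, Ideal.mem_span_pair]
  constructor
  · rintro ⟨v, rfl⟩
    exact ⟨v 0, -v 1, by simp; ring⟩
  · rintro ⟨c, d, rfl⟩
    exact ⟨![c, -d], by simp; ring⟩

/-- Exactness of the Koszul complex in the middle: `a v₀ = b v₁` forces `a ∣ v₁` since `a` is
prime and does not divide `b`. -/
theorem koszul_exact [IsDomain R] {a b : R} (ha : Prime a) (hab : ¬a ∣ b) :
    Function.Exact (koszulIn a b) (koszulOut a b) := by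
  intro v
  rw [koszulOut_apply, sub_eq_zero, Set.mem_range]
  constructor
  · intro hv
    obtain ⟨h, hh⟩ := (ha.dvd_or_dvd ⟨v 0, hv.symm⟩).resolve_left hab
    have hv0 : v 0 = h * b := mul_left_cancel₀ ha.ne_zero (by rw [hv, hh]; ring)
    exact ⟨h, by ext i; fin_cases i <;> simp [hv0, hh, mul_comm]⟩
  · rintro ⟨h, rfl⟩
    simp only [koszulIn_apply, Matrix.cons_val_zero, Matrix.cons_val_one]
    ring

end Koszul

theorem toLin'_rank2DM (k : Type) [Field k] :
    Matrix.toLin' (rank2DM k) = koszulIn (X 0) (X 1) ∘ₗ koszulOut (X 0) (X 1) := by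
  refine LinearMap.ext fun v => funext fun i => ?_
  fin_cases i <;>
    simp [rank2DM, Matrix.mulVec, dotProduct, Fin.sum_univ_two] <;> ring

/-- `d² = 0` and the homology `ker d ⧸ im d` is isomorphic to
`k = S/(x₁, x₂)` as an `S`-module. -/
theorem stmt7 (k : Type) [Field k] :
    (Matrix.toLin' (rank2DM k) ∘ₗ Matrix.toLin' (rank2DM k) = 0) ∧
    Nonempty ((LinearMap.ker (Matrix.toLin' (rank2DM k)) ⧸
        (LinearMap.range (Matrix.toLin' (rank2DM k))).comap
          (LinearMap.ker (Matrix.toLin' (rank2DM k))).subtype)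
      ≃ₗ[MvPolynomial (Fin 2) k]
        MvPolynomial (Fin 2) k ⧸
          Ideal.span {(X 0 : MvPolynomial (Fin 2) k), X 1}) := by
  have hX₀ : Prime (X 0 : MvPolynomial (Fin 2) k) := X_prime
  have hexact := koszul_exact hX₀ (b := X 1) (by rw [X_dvd_X]; decide)
  have hinj := koszulIn_injective (X 1) hX₀.ne_zero
  rw [toLin'_rank2DM]
  exact ⟨comp_comp_self_eq_zero hexact.linearMap_comp_eq_zero,
    ⟨(differentialHomologyEquivOfExact hinj hexact).trans
      (Submodule.quotEquivOfEq _ _ (range_koszulOut _ _))⟩⟩
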